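/- arXiv:0710.3884 — 13 statements merged into one kernel-verified Lean document; each statement's English description precedes it below -/
import Mathlib

section
/- Let (G,f) be an n-ary group and μ a fuzzy subset of G. Then μ is a fuzzy n-ary subgroup of (G,f) if and only if for every t ∈ [0,1] the level subset μ_t, whenever it is nonempty, is an n-ary subgroup of (G,f). -/
open Classical

variable {G : Type*}

/-- The composition appearing in the (i,j)-associativity law: apply `f` to the
sequence `x : Fin (2n-1) → G` with an inner application of `f` starting at position `i`. -/
def nAryComp {n : ℕ} (f : (Fin n → G) → G) (i : Fin n) (x : Fin (2 * n - 1) → G) : G :=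
  f (fun k => if (k : ℕ) < (i : ℕ) then
        x ⟨(k : ℕ), by have hk := k.isLt; omega⟩
      else if (k : ℕ) = (i : ℕ) then
        f (fun m => x ⟨(i : ℕ) + (m : ℕ), by have hi := i.isLt; have hm := m.isLt; omega⟩)
      else x ⟨(k : ℕ) + n - 1, by have hk := k.isLt; omega⟩)

/-- `(G, f)` is an `n`-ary group: `f` is associative and all equations are uniquely solvable. -/
structure IsNAryGroup (n : ℕ) (f : (Fin n → G) → G) : Prop where
  assoc : ∀ (i j : Fin n) (x : Fin (2 * n - 1) → G), nAryComp f i x = nAryComp f j x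
  solv : ∀ (i : Fin n) (x : Fin n → G) (x₀ : G), ∃! z : G, f (Function.update x i z) = x₀

/-- `y` is the skew element of `x`: `f(x,...,x,y) = x` with `x` repeated `n-1` times. -/
def IsSkew {n : ℕ} (f : (Fin n → G) → G) (x y : G) : Prop :=
  f (fun k => if (k : ℕ) = n - 1 then y else x) = x

/-- `H` is an `n`-ary subgroup of `(G,f)`. -/
def IsNArySubgroup {n : ℕ} (f : (Fin n → G) → G) (H : Set G) : Prop :=
  H.Nonempty ∧ (∀ x : Fin n → G, (∀ i, x i ∈ H) → f x ∈ H) ∧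
    ∀ x y : G, x ∈ H → IsSkew f x y → y ∈ H

/-- `μ` is a fuzzy `n`-ary subgroup of `(G,f)`. -/
def IsFuzzyNArySubgroup {n : ℕ} (f : (Fin n → G) → G) (μ : G → ℝ) : Prop :=
  (∀ x : Fin n → G, (⨅ i, μ (x i)) ≤ μ (f x)) ∧
    ∀ x y : G, IsSkew f x y → μ x ≤ μ y

/-- A fuzzy subset `μ` of an `n`-ary group `(G,f)` is a fuzzy `n`-ary subgroup iff every
nonempty level subset `μ_t`, `t ∈ [0,1]`, is an `n`-ary subgroup of `(G,f)`. -/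
theorem stmt0 [Nonempty G] {n : ℕ} (hn : 2 ≤ n)
    (f : (Fin n → G) → G) (hf : IsNAryGroup n f)
    (μ : G → ℝ) (hμ : ∀ x, μ x ∈ Set.Icc (0 : ℝ) 1) :
    IsFuzzyNArySubgroup f μ ↔
      ∀ t ∈ Set.Icc (0 : ℝ) 1, ({x : G | t ≤ μ x}).Nonempty →
        IsNArySubgroup f {x : G | t ≤ μ x} := by
  have hne : Nonempty (Fin n) := ⟨⟨0, by omega⟩⟩
  constructor
  · rintro ⟨h1, h2⟩ t ht hS
    refine ⟨hS, fun x hx => ?_, fun x y hxH hsk => ?_⟩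
    · exact le_trans (le_ciInf fun i => hx i) (h1 x)
    · exact le_trans hxH (h2 x y hsk)
  · intro h
    constructor
    · intro x
      set t := ⨅ i, μ (x i) with ht
      have hbdd : BddBelow (Set.range fun i => μ (x i)) := (Set.finite_range _).bddBelow
      have ht0 : 0 ≤ t := le_ciInf fun i => (hμ (x i)).1
      have ht1 : t ≤ 1 := le_trans (ciInf_le hbdd (Classical.arbitrary _)) (hμ _).2
      have hmem : ∀ i, x i ∈ {z : G | t ≤ μ z} := fun i => ciInf_le hbdd i
      exact (h t ⟨ht0, ht1⟩ ⟨x (Classical.arbitrary _), hmem _⟩).2.1 x hmem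
    · intro x y hsk
      exact (h (μ x) (hμ x) ⟨x, le_refl (μ x)⟩).2.2 x y (le_refl (μ x)) hsk
end

section
/- Let μ be a fuzzy n-ary subgroup of an n-ary group (G,f) and suppose there exists a ∈ G such that μ(a) ≥ μ(x) for every x ∈ G. Then μ is a fuzzy subgroup of the retract group ret_a(G,f); that is, μ(x ∘ y) ≥ min{μ(x),μ(y)} for all x,y ∈ G and μ(x⁻¹) ≥ μ(x) for all x ∈ G, where ∘ denotes the retract operation and x⁻¹ = f(ā, x,...,x, x̄, ā) (x repeated n−3 times) is the inverse of x in ret_a(G,f). -/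
open Classical

variable {G : Type*}

/-- The retract operation `x ∘ y = f(x, a, ..., a, y)` with `a` repeated `n-2` times. -/
def retOp {n : ℕ} (f : (Fin n → G) → G) (a x y : G) : G :=
  f (fun k => if (k : ℕ) = 0 then x else if (k : ℕ) = n - 1 then y else a)

/-- The inverse of `x` in `ret_a(G,f)`: `f(ā, x, ..., x, x̄, ā)` with `x` repeated `n-3` times,
where `abar` and `xbar` denote the skew elements of `a` and `x`. -/
def retInv {n : ℕ} (f : (Fin n → G) → G) (abar x xbar : G) : G :=
  f (fun k => if (k : ℕ) = 0 then abar else if (k : ℕ) = n - 1 then abar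
      else if (k : ℕ) = n - 2 then xbar else x)

/-- If `μ` is a fuzzy `n`-ary subgroup of `(G,f)` and `μ(a) ≥ μ(x)` for all `x ∈ G`, then
`μ` is a fuzzy subgroup of the retract group `ret_a(G,f)`. -/
theorem stmt4 [Nonempty G] {n : ℕ} (hn : 3 ≤ n)
    (f : (Fin n → G) → G) (hf : IsNAryGroup n f)
    (μ : G → ℝ) (hμ : ∀ x, μ x ∈ Set.Icc (0 : ℝ) 1)
    (hfuz : IsFuzzyNArySubgroup f μ)
    (a : G) (ha : ∀ x, μ x ≤ μ a) :
    (∀ x y : G, min (μ x) (μ y) ≤ μ (retOp f a x y)) ∧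
      ∀ x abar xbar : G, IsSkew f a abar → IsSkew f x xbar →
        μ x ≤ μ (retInv f abar x xbar) := by
  haveI : Nonempty (Fin n) := ⟨⟨0, by omega⟩⟩
  constructor
  · intro x y
    refine le_trans ?_ (hfuz.1 _)
    apply le_ciInf
    intro i
    split_ifs
    · exact min_le_left _ _
    · exact min_le_right _ _
    · exact le_trans (min_le_left _ _) (ha x)
  · intro x abar xbar hA hX
    refine le_trans ?_ (hfuz.1 _)
    apply le_ciInf
    intro i
    have h1 : μ x ≤ μ abar := (ha x).trans (hfuz.2 a abar hA)
    have h2 := hfuz.2 x xbar hX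
    split_ifs <;> first | exact h1 | exact h2 | exact le_refl _
end

section
/- Let (G,f) be the n-ary group b-derived from a group (G,∘), i.e. f(x_1,...,x_n) = x_1 ∘ x_2 ∘ ... ∘ x_n ∘ b where b lies in the center of (G,∘). If μ is a fuzzy subgroup of (G,∘) such that μ(b) ≥ μ(x) for every x ∈ G, then μ is a fuzzy n-ary subgroup of (G,f). -/
open Classical

variable {G : Type*}

/-
Every subgroup of `H` containing `b` is closed under `f` and under taking skew elements, since
the skew element of `x` is `(x ^ (n - 1))⁻¹ * x * b⁻¹`. A fuzzy subgroup `μ` is exactly a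
family of such subgroups: its level sets `{x | μ a ≤ μ x}`, which contain `b` because `μ b` is
maximal. Both conditions on `μ` are then membership statements in a suitable level subgroup,
the level of the infimum being attained since it is taken over finitely many values.
-/

section FuzzySubgroup

variable {H : Type*} [Group H] {μ : H → ℝ}

theorem le_apply_one (h₁ : ∀ x y : H, min (μ x) (μ y) ≤ μ (x * y))
    (h₂ : ∀ x : H, μ x ≤ μ x⁻¹) (x : H) : μ x ≤ μ 1 := by
  simpa using le_trans (le_min le_rfl (h₂ x)) (h₁ x x⁻¹)

def levelSubgroup (h₁ : ∀ x y : H, min (μ x) (μ y) ≤ μ (x * y))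
    (h₂ : ∀ x : H, μ x ≤ μ x⁻¹) (a : H) : Subgroup H where
  carrier := {x | μ a ≤ μ x}
  mul_mem' {x y} hx hy := le_trans (le_min hx hy) (h₁ x y)
  one_mem' := le_apply_one h₁ h₂ a
  inv_mem' {x} hx := le_trans hx (h₂ x)

theorem mem_levelSubgroup {h₁ : ∀ x y : H, min (μ x) (μ y) ≤ μ (x * y)}
    {h₂ : ∀ x : H, μ x ≤ μ x⁻¹} {a x : H} : x ∈ levelSubgroup h₁ h₂ a ↔ μ a ≤ μ x :=
  Iff.rfl

end FuzzySubgroup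

theorem List.ofFn_ite_eq_last {α : Type*} {n : ℕ} (hn : 1 ≤ n) (x y : α) :
    List.ofFn (fun k : Fin n => if (k : ℕ) = n - 1 then y else x)
      = List.replicate (n - 1) x ++ [y] := by
  apply List.ext_getElem
  · simp only [List.length_ofFn, List.length_append, List.length_replicate,
      List.length_singleton]
    omega
  · intro i hi _
    simp only [List.getElem_ofFn]
    rcases Nat.lt_or_ge i (n - 1) with hlt | hge
    · rw [List.getElem_append_left (by simpa using hlt)]
      simp [Nat.ne_of_lt hlt]
    · have hlast : i = n - 1 := by simp only [List.length_ofFn] at hi; omega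
      rw [List.getElem_append_right (by simpa using hge)]
      simp [hlast]

section DerivedNAryGroup

variable {H : Type*} [Group H] {n : ℕ}

theorem eq_of_isSkew_derived (hn : 1 ≤ n) {b x y : H}
    (h : IsSkew (fun x : Fin n → H => (List.ofFn x).prod * b) x y) :
    y = (x ^ (n - 1))⁻¹ * x * b⁻¹ := by
  rw [IsSkew, List.ofFn_ite_eq_last hn, List.prod_append, List.prod_replicate,
    List.prod_singleton] at h
  calc y = (x ^ (n - 1))⁻¹ * (x ^ (n - 1) * y * b) * b⁻¹ := by group
    _ = (x ^ (n - 1))⁻¹ * x * b⁻¹ := by rw [h]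

theorem Subgroup.isNArySubgroup_derived (hn : 1 ≤ n) {b : H} {S : Subgroup H} (hb : b ∈ S) :
    IsNArySubgroup (fun x : Fin n → H => (List.ofFn x).prod * b) (S : Set H) := by
  refine ⟨⟨1, S.one_mem⟩, fun x hx => ?_, fun x y hx hxy => ?_⟩
  · refine S.mul_mem (S.list_prod_mem fun a ha => ?_) hb
    obtain ⟨i, rfl⟩ := List.mem_ofFn.mp ha
    exact hx i
  · rw [eq_of_isSkew_derived hn hxy]
    exact S.mul_mem (S.mul_mem (S.inv_mem (S.pow_mem hx _)) hx) (S.inv_mem hb)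

end DerivedNAryGroup

theorem stmt7_general {H : Type*} [Group H] {n : ℕ} (hn : 2 ≤ n)
    (b : H)
    (μ : H → ℝ)
    (h₁ : ∀ x y : H, min (μ x) (μ y) ≤ μ (x * y))
    (h₂ : ∀ x : H, μ x ≤ μ x⁻¹)
    (hbmax : ∀ x, μ x ≤ μ b) :
    IsFuzzyNArySubgroup (fun x : Fin n → H => (List.ofFn x).prod * b) μ := by
  have hderived (a : H) :=
    (levelSubgroup h₁ h₂ a).isNArySubgroup_derived (n := n) (by omega) (hbmax a)
  refine ⟨fun x => ?_, fun x y hxy => (hderived x).2.2 x y (mem_levelSubgroup.mpr le_rfl) hxy⟩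
  have : Nonempty (Fin n) := ⟨⟨0, by omega⟩⟩
  obtain ⟨i₀, hi₀⟩ := exists_eq_ciInf_of_finite (f := fun i => μ (x i))
  rw [← hi₀]
  refine (hderived (x i₀)).2.1 x fun i => ?_
  rw [SetLike.mem_coe, mem_levelSubgroup, hi₀]
  exact ciInf_le (Set.finite_range _).bddBelow i

/-- Let `(G,f)` be the `n`-ary group `b`-derived from a group `G`, with `b` central:
`f(x₁,...,xₙ) = x₁ * x₂ * ⋯ * xₙ * b`. Any fuzzy subgroup `μ` of `G` with `μ(b) ≥ μ(x)` for
every `x ∈ G` is a fuzzy `n`-ary subgroup of `(G,f)`. -/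
theorem stmt7 {H : Type*} [Group H] {n : ℕ} (hn : 2 ≤ n)
    (b : H) (hb : b ∈ Subgroup.center H)
    (μ : H → ℝ) (hμ : ∀ x, μ x ∈ Set.Icc (0 : ℝ) 1)
    (h₁ : ∀ x y : H, min (μ x) (μ y) ≤ μ (x * y))
    (h₂ : ∀ x : H, μ x ≤ μ x⁻¹)
    (hbmax : ∀ x, μ x ≤ μ b) :
    IsFuzzyNArySubgroup (fun x : Fin n → H => (List.ofFn x).prod * b) μ :=
  stmt7_general hn b μ h₁ h₂ hbmax
end

section
/- Let μ and λ be two fuzzy n-ary subgroups of an n-ary group (G,f) with the same family of level subsets, i.e. {μ_t : t ∈ Im(μ)} = {λ_s : s ∈ Im(λ)}. Suppose Im(μ) = {t_1,...,t_m} and Im(λ) = {s_1,...,s_p} with t_1 > t_2 > ... > t_m and s_1 > s_2 > ... > s_p. Then: (i) m = p; (ii) μ_{t_i} = λ_{s_i} for i = 1,...,m; and (iii) for every x ∈ G and i ∈ {1,...,m}, if μ(x) = t_i then λ(x) = s_i. -/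
open Classical

variable {G : Type*}

/-!
As `i` increases, `t i` decreases, so the level sets `μ_{t i}` form a strictly increasing chain
(strictly, because every `t i` is a value of `μ`). The chains of `μ` and `λ` have the same range,
and two strictly increasing enumerations of the same finite chain coincide. Finally, the index `i`
with `μ x = t i` is recovered from the level sets alone: it is the least `k` with `x ∈ μ_{t k}`.
-/

open Set

theorem strictMono_levelSets {α β ι : Type*} [LinearOrder β] [Preorder ι] {μ : α → β}
    {t : ι → β} (ht : StrictAnti t) (hrange : range t ⊆ range μ) :
    StrictMono fun i => {x | t i ≤ μ x} := by
  intro i j hij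
  obtain ⟨x, hx⟩ := hrange ⟨j, rfl⟩
  refine (ssubset_iff_of_subset fun y hy => (ht hij).le.trans hy).2
    ⟨x, hx.ge, fun hxi => (ht hij).not_ge (hx ▸ hxi)⟩

theorem StrictAnti.eq_apply_iff_forall_apply_le_iff {β ι : Type*} [LinearOrder β]
    [LinearOrder ι] {t : ι → β} {b : β} (ht : StrictAnti t) (hb : b ∈ range t) (i : ι) :
    b = t i ↔ ∀ k, t k ≤ b ↔ i ≤ k := by
  obtain ⟨j, rfl⟩ := hb
  constructor
  · rintro hji k
    rw [hji, ht.le_iff_ge]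
  · intro H
    exact congrArg t (le_antisymm (ht.le_iff_ge.1 ((H i).2 le_rfl)) ((H j).1 le_rfl))

theorem Fin.exists_eq_cast_of_strictMono_of_range_eq {γ : Type*} [Preorder γ] {m p : ℕ}
    {A : Fin m → γ} {B : Fin p → γ} (hA : StrictMono A) (hB : StrictMono B)
    (hAB : range A = range B) : ∃ h : m = p, ∀ i, A i = B (Fin.cast h i) := by
  have h : m = p := by
    have hcard := Nat.card_range_of_injective hA.injective
    rw [hAB, Nat.card_range_of_injective hB.injective] at hcard
    simpa using hcard.symm
  subst h
  exact ⟨rfl, fun i => by rw [(hA.range_inj hB).1 hAB]; rfl⟩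

theorem stmt10_general
    (μ lam : G → ℝ)
    (m p : ℕ) (t : Fin m → ℝ) (s : Fin p → ℝ)
    (htanti : StrictAnti t) (hsanti : StrictAnti s)
    (hImμ : Set.range μ = Set.range t) (hImlam : Set.range lam = Set.range s)
    (hlev : {S : Set G | ∃ i : Fin m, S = {x : G | t i ≤ μ x}} =
            {S : Set G | ∃ j : Fin p, S = {x : G | s j ≤ lam x}}) :
    ∃ h : m = p,
      (∀ i : Fin m, {x : G | t i ≤ μ x} = {x : G | s (Fin.cast h i) ≤ lam x}) ∧
        ∀ (x : G) (i : Fin m), μ x = t i → lam x = s (Fin.cast h i) := by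
  have hrange : range (fun i => {x : G | t i ≤ μ x}) = range fun j => {x : G | s j ≤ lam x} := by
    simpa only [range, eq_comm] using hlev
  obtain ⟨rfl, hlevels⟩ := Fin.exists_eq_cast_of_strictMono_of_range_eq
    (strictMono_levelSets htanti hImμ.ge) (strictMono_levelSets hsanti hImlam.ge) hrange
  refine ⟨rfl, hlevels, fun x i hx => ?_⟩
  have hμx := (htanti.eq_apply_iff_forall_apply_le_iff (hImμ ▸ mem_range_self x) i).1 hx
  refine (hsanti.eq_apply_iff_forall_apply_le_iff (hImlam ▸ mem_range_self x) i).2 fun k => ?_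
  rw [← hμx k]
  exact (Set.ext_iff.1 (hlevels k) x).symm

/-- Let `μ` and `λ` be fuzzy `n`-ary subgroups of `(G,f)` with the same family of level
subsets, `Im(μ) = {t₁ > ... > t_m}` and `Im(λ) = {s₁ > ... > s_p}`. Then `m = p`,
`μ_{tᵢ} = λ_{sᵢ}` for all `i`, and `μ(x) = tᵢ` implies `λ(x) = sᵢ`. -/
theorem stmt10 [Nonempty G] {n : ℕ} (hn : 2 ≤ n)
    (f : (Fin n → G) → G) (hf : IsNAryGroup n f)
    (μ lam : G → ℝ)
    (hμ : ∀ x, μ x ∈ Set.Icc (0 : ℝ) 1) (hlam : ∀ x, lam x ∈ Set.Icc (0 : ℝ) 1)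
    (hfμ : IsFuzzyNArySubgroup f μ) (hflam : IsFuzzyNArySubgroup f lam)
    (m p : ℕ) (t : Fin m → ℝ) (s : Fin p → ℝ)
    (htanti : StrictAnti t) (hsanti : StrictAnti s)
    (hImμ : Set.range μ = Set.range t) (hImlam : Set.range lam = Set.range s)
    (hlev : {S : Set G | ∃ i : Fin m, S = {x : G | t i ≤ μ x}} =
            {S : Set G | ∃ j : Fin p, S = {x : G | s j ≤ lam x}}) :
    ∃ h : m = p,
      (∀ i : Fin m, {x : G | t i ≤ μ x} = {x : G | s (Fin.cast h i) ≤ lam x}) ∧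
        ∀ (x : G) (i : Fin m), μ x = t i → lam x = s (Fin.cast h i) :=
  stmt10_general μ lam m p t s htanti hsanti hImμ hImlam hlev
end

section
/- Let μ and λ be two fuzzy n-ary subgroups of an n-ary group (G,f) with finite images and with the same family of level subsets, i.e. {μ_t : t ∈ Im(μ)} = {λ_s : s ∈ Im(λ)}. Then μ = λ if and only if Im(μ) = Im(λ). -/
open Classical

variable {G : Type*}

private lemma level_subset_iff {α : Type*} (μ : α → ℝ) {t : ℝ} (ht : t ∈ Set.range μ)
    (s : ℝ) : {x | t ≤ μ x} ⊆ {x | s ≤ μ x} ↔ s ≤ t := by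
  constructor
  · intro h
    obtain ⟨y, hy⟩ := ht
    have : s ≤ μ y := h (by simp [Set.mem_setOf_eq, hy])
    simpa [hy] using this
  · intro h x hx
    exact le_trans h hx

private lemma key_eq {α : Type*} (μ lam : α → ℝ)
    (hfinμ : (Set.range μ).Finite)
    (hrange : Set.range μ = Set.range lam)
    (hlev : {S : Set α | ∃ r ∈ Set.range μ, S = {x | r ≤ μ x}} =
            {S : Set α | ∃ r ∈ Set.range lam, S = {x | r ≤ lam x}})
    {t : ℝ} (ht : t ∈ Set.range μ) :
    {x | t ≤ μ x} = {x | t ≤ lam x} := by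
  have ht' : t ∈ Set.range lam := hrange ▸ ht
  have hFfin : {S : Set α | ∃ r ∈ Set.range μ, S = {x | r ≤ μ x}}.Finite := by
    have : {S : Set α | ∃ r ∈ Set.range μ, S = {x | r ≤ μ x}} ⊆
        (fun r => {x | r ≤ μ x}) '' Set.range μ := by
      rintro S ⟨r, hr, rfl⟩
      exact ⟨r, hr, rfl⟩
    exact (hfinμ.image _).subset this
  have h1 : {S | S ∈ {S : Set α | ∃ r ∈ Set.range μ, S = {x | r ≤ μ x}} ∧
        S ⊆ {x | t ≤ μ x}} = (fun r => {x | r ≤ μ x}) '' {s ∈ Set.range μ | t ≤ s} := by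
    ext S
    constructor
    · rintro ⟨⟨r, hr, rfl⟩, hsub⟩
      exact ⟨r, ⟨hr, (level_subset_iff μ hr t).mp hsub⟩, rfl⟩
    · rintro ⟨r, ⟨hr, htr⟩, rfl⟩
      exact ⟨⟨r, hr, rfl⟩, fun x hx => le_trans htr hx⟩
  have h2 : {S | S ∈ {S : Set α | ∃ r ∈ Set.range μ, S = {x | r ≤ μ x}} ∧
        S ⊆ {x | t ≤ lam x}} = (fun r => {x | r ≤ lam x}) '' {s ∈ Set.range lam | t ≤ s} := by
    ext S
    constructor
    · rintro ⟨hSF, hsub⟩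
      rw [hlev] at hSF
      obtain ⟨r, hr, rfl⟩ := hSF
      exact ⟨r, ⟨hr, (level_subset_iff lam hr t).mp hsub⟩, rfl⟩
    · rintro ⟨r, ⟨hr, htr⟩, rfl⟩
      refine ⟨?_, fun x hx => le_trans htr hx⟩
      rw [hlev]
      exact ⟨r, hr, rfl⟩
  have injμ : Set.InjOn (fun r => {x | r ≤ μ x}) {s ∈ Set.range μ | t ≤ s} := by
    intro a ha b hb hab
    simp only at hab
    have h1' := (level_subset_iff μ ha.1 b).mp hab.le
    have h2' := (level_subset_iff μ hb.1 a).mp hab.ge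
    linarith
  have injl : Set.InjOn (fun r => {x | r ≤ lam x}) {s ∈ Set.range lam | t ≤ s} := by
    intro a ha b hb hab
    simp only at hab
    have h1' := (level_subset_iff lam ha.1 b).mp hab.le
    have h2' := (level_subset_iff lam hb.1 a).mp hab.ge
    linarith
  have hncard : {S | S ∈ {S : Set α | ∃ r ∈ Set.range μ, S = {x | r ≤ μ x}} ∧
        S ⊆ {x | t ≤ μ x}}.ncard =
      {S | S ∈ {S : Set α | ∃ r ∈ Set.range μ, S = {x | r ≤ μ x}} ∧
        S ⊆ {x | t ≤ lam x}}.ncard := by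
    rw [h1, h2, Set.ncard_image_of_injOn injμ, Set.ncard_image_of_injOn injl, hrange]
  have hμF : {x | t ≤ μ x} ∈ {S : Set α | ∃ r ∈ Set.range μ, S = {x | r ≤ μ x}} :=
    ⟨t, ht, rfl⟩
  have hlF : {x | t ≤ lam x} ∈ {S : Set α | ∃ r ∈ Set.range μ, S = {x | r ≤ μ x}} := by
    rw [hlev]; exact ⟨t, ht', rfl⟩
  obtain ⟨r, hr, hreq⟩ := hlF
  have hlF' : {x | t ≤ lam x} ∈ {S : Set α | ∃ r ∈ Set.range μ, S = {x | r ≤ μ x}} :=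
    ⟨r, hr, hreq⟩
  have hcomp : {x | t ≤ μ x} ⊆ {x | t ≤ lam x} ∨ {x | t ≤ lam x} ⊆ {x | t ≤ μ x} := by
    rw [hreq]
    rcases le_total r t with h | h
    · exact Or.inl ((level_subset_iff μ ht r).mpr h)
    · exact Or.inr ((level_subset_iff μ hr t).mpr h)
  rcases hcomp with h | h
  · have hsub : {S | S ∈ {S : Set α | ∃ r ∈ Set.range μ, S = {x | r ≤ μ x}} ∧
        S ⊆ {x | t ≤ μ x}} ⊆ {S | S ∈ {S : Set α | ∃ r ∈ Set.range μ, S = {x | r ≤ μ x}} ∧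
        S ⊆ {x | t ≤ lam x}} := fun S hS => ⟨hS.1, hS.2.trans h⟩
    have heq := Set.eq_of_subset_of_ncard_le hsub hncard.ge
      (hFfin.subset (fun S hS => hS.1))
    have hmem : {x | t ≤ lam x} ∈ {S | S ∈
        {S : Set α | ∃ r ∈ Set.range μ, S = {x | r ≤ μ x}} ∧ S ⊆ {x | t ≤ μ x}} :=
      heq ▸ ⟨hlF', subset_rfl⟩
    exact Set.Subset.antisymm h hmem.2
  · have hsub : {S | S ∈ {S : Set α | ∃ r ∈ Set.range μ, S = {x | r ≤ μ x}} ∧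
        S ⊆ {x | t ≤ lam x}} ⊆ {S | S ∈ {S : Set α | ∃ r ∈ Set.range μ, S = {x | r ≤ μ x}} ∧
        S ⊆ {x | t ≤ μ x}} := fun S hS => ⟨hS.1, hS.2.trans h⟩
    have heq := Set.eq_of_subset_of_ncard_le hsub hncard.le
      (hFfin.subset (fun S hS => hS.1))
    have hmem : {x | t ≤ μ x} ∈ {S | S ∈
        {S : Set α | ∃ r ∈ Set.range μ, S = {x | r ≤ μ x}} ∧ S ⊆ {x | t ≤ lam x}} :=
      heq ▸ ⟨hμF, subset_rfl⟩
    exact Set.Subset.antisymm hmem.2 h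

/-- Let `μ` and `λ` be fuzzy `n`-ary subgroups of `(G,f)` with finite images and the same
family of level subsets. Then `μ = λ` iff `Im(μ) = Im(λ)`. -/
theorem stmt11 [Nonempty G] {n : ℕ} (hn : 2 ≤ n)
    (f : (Fin n → G) → G) (hf : IsNAryGroup n f)
    (μ lam : G → ℝ)
    (hμ : ∀ x, μ x ∈ Set.Icc (0 : ℝ) 1) (hlam : ∀ x, lam x ∈ Set.Icc (0 : ℝ) 1)
    (hfμ : IsFuzzyNArySubgroup f μ) (hflam : IsFuzzyNArySubgroup f lam)
    (hfinμ : (Set.range μ).Finite) (hfinlam : (Set.range lam).Finite)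
    (hlev : {S : Set G | ∃ r ∈ Set.range μ, S = {x : G | r ≤ μ x}} =
            {S : Set G | ∃ r ∈ Set.range lam, S = {x : G | r ≤ lam x}}) :
    μ = lam ↔ Set.range μ = Set.range lam := by
  constructor
  · rintro rfl; rfl
  · intro hr
    funext x
    have h1 : μ x ≤ lam x := by
      have heq := key_eq μ lam hfinμ hr hlev (Set.mem_range_self x)
      have hx : x ∈ {y | μ x ≤ μ y} := Set.mem_setOf_eq ▸ le_refl _
      exact (heq ▸ hx : x ∈ {y | μ x ≤ lam y})
    have h2 : lam x ≤ μ x := by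
      have hmem : lam x ∈ Set.range μ := hr ▸ Set.mem_range_self x
      have heq := key_eq μ lam hfinμ hr hlev hmem
      have hx : x ∈ {y | lam x ≤ lam y} := Set.mem_setOf_eq ▸ le_refl _
      exact (heq.symm ▸ hx : x ∈ {y | lam x ≤ μ y})
    linarith
end

section
/- Let (G,f) be an n-ary group and let {H_i : i ∈ I}, where I ⊆ [0,1], be a collection of n-ary subgroups of G such that (i) G = ⋃_{i∈I} H_i and (ii) for all i,j ∈ I, i > j holds if and only if H_i is a proper subset of H_j. Then the fuzzy subset μ defined by μ(x) = sup{i ∈ I : x ∈ H_i} is a fuzzy n-ary subgroup of (G,f). -/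
open Classical

variable {G : Type*}

/-- Let `{H_i : i ∈ I}`, `I ⊆ [0,1]`, be a collection of `n`-ary subgroups of `G` with
`G = ⋃_{i∈I} H_i` and `i > j ↔ H_i ⊂ H_j`. Then `μ(x) = sup {i ∈ I : x ∈ H_i}` defines a
fuzzy `n`-ary subgroup of `(G,f)`. -/
theorem stmt12 [Nonempty G] {n : ℕ} (hn : 2 ≤ n)
    (f : (Fin n → G) → G) (hf : IsNAryGroup n f)
    (I : Set ℝ) (hI : I ⊆ Set.Icc (0 : ℝ) 1)
    (H : ℝ → Set G) (hH : ∀ i ∈ I, IsNArySubgroup f (H i))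
    (hcover : (⋃ i ∈ I, H i) = Set.univ)
    (hchain : ∀ i ∈ I, ∀ j ∈ I, j < i ↔ H i ⊂ H j) :
    IsFuzzyNArySubgroup f (fun x => sSup {i : ℝ | i ∈ I ∧ x ∈ H i}) := by
  have hbdd : ∀ z : G, BddAbove {i : ℝ | i ∈ I ∧ z ∈ H i} :=
    fun z => ⟨1, fun i hi => (hI hi.1).2⟩
  have hne : ∀ z : G, {i : ℝ | i ∈ I ∧ z ∈ H i}.Nonempty := by
    intro z
    have : z ∈ ⋃ i ∈ I, H i := hcover ▸ Set.mem_univ z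
    obtain ⟨i, hi, hz⟩ := Set.mem_iUnion₂.mp this
    exact ⟨i, hi, hz⟩
  have hmono : ∀ i ∈ I, ∀ j ∈ I, j ≤ i → H i ⊆ H j := by
    intro i hi j hj hle
    rcases hle.lt_or_eq with h | h
    · exact ((hchain i hi j hj).mp h).subset
    · subst h; exact subset_rfl
  constructor
  · intro x
    haveI : Nonempty (Fin n) := ⟨⟨0, by omega⟩⟩
    refine le_of_forall_lt fun c hc => ?_
    have hck : ∀ k : Fin n, c < sSup {i : ℝ | i ∈ I ∧ x k ∈ H i} := by
      intro k
      refine lt_of_lt_of_le hc (ciInf_le ?_ k)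
      exact (Set.finite_range _).bddBelow
    have hex : ∀ k : Fin n, ∃ a, (a ∈ I ∧ x k ∈ H a) ∧ c < a := by
      intro k
      obtain ⟨a, ha, hca⟩ := exists_lt_of_lt_csSup (hne (x k)) (hck k)
      exact ⟨a, ha, hca⟩
    choose g hg hcg using hex
    obtain ⟨k0, -, hk0⟩ := Finset.exists_min_image Finset.univ g ⟨Classical.arbitrary _, Finset.mem_univ _⟩
    have hfx : f x ∈ H (g k0) := by
      refine (hH (g k0) (hg k0).1).2.1 x fun k => ?_
      exact hmono (g k) (hg k).1 (g k0) (hg k0).1 (hk0 k (Finset.mem_univ k)) (hg k).2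
    exact lt_of_lt_of_le (hcg k0) (le_csSup (hbdd _) ⟨(hg k0).1, hfx⟩)
  · intro x y hskew
    refine csSup_le_csSup (hbdd y) (hne x) fun i hi => ?_
    exact ⟨hi.1, (hH i hi.1).2.2 x y hi.2 hskew⟩
end

section
/- Let (G,f) be an n-ary group and μ a fuzzy subset of G with Im(μ) = {t_0,t_1,...,t_m} where t_0 > t_1 > ... > t_m. If there exist n-ary subgroups H_0 ⊂ H_1 ⊂ ... ⊂ H_m = G of (G,f) such that μ takes the constant value t_k on H_k \ H_{k-1} for every k = 0,1,...,m (where H_{-1} = ∅), then μ is a fuzzy n-ary subgroup of (G,f). -/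
open Classical

variable {G : Type*}

/-- Let `μ` be a fuzzy set on `(G,f)` with `Im(μ) = {t₀ > t₁ > ... > t_m}`.  If there are
`n`-ary subgroups `H₀ ⊂ H₁ ⊂ ... ⊂ H_m = G` such that `μ` equals `t_k` on `H_k \ H_{k-1}`
(`H_{-1} = ∅`), then `μ` is a fuzzy `n`-ary subgroup of `(G,f)`. -/
theorem stmt13 [Nonempty G] {n : ℕ} (hn : 2 ≤ n)
    (f : (Fin n → G) → G) (hf : IsNAryGroup n f)
    (μ : G → ℝ) (hμ : ∀ x, μ x ∈ Set.Icc (0 : ℝ) 1)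
    (m : ℕ) (t : Fin (m + 1) → ℝ) (ht : StrictAnti t)
    (hIm : Set.range μ = Set.range t)
    (H : Fin (m + 1) → Set G) (hHsub : ∀ k, IsNArySubgroup f (H k))
    (hchain : StrictMono H) (hlast : H (Fin.last m) = Set.univ)
    (hval : ∀ (k : Fin (m + 1)) (x : G), x ∈ H k → (∀ j, j < k → x ∉ H j) → μ x = t k) :
    IsFuzzyNArySubgroup f μ := by
  classical
  -- level function: least k with x ∈ H k
  have hex : ∀ x : G, ∃ k : ℕ, ∃ hk : k < m + 1, x ∈ H ⟨k, hk⟩ := by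
    intro x
    exact ⟨m, Nat.lt_succ_self m, by simpa [Fin.last] using (hlast ▸ Set.mem_univ x : x ∈ H (Fin.last m))⟩
  let lvl : G → Fin (m + 1) := fun x => ⟨Nat.find (hex x), (Nat.find_spec (hex x)).1⟩
  have hmem : ∀ x : G, x ∈ H (lvl x) := fun x => (Nat.find_spec (hex x)).2
  have hmin : ∀ x : G, ∀ j, j < lvl x → x ∉ H j := by
    intro x j hj hxj
    have := Nat.find_min (hex x) (m := (j : ℕ)) hj
    exact this ⟨j.isLt, by simpa using hxj⟩
  have hμlvl : ∀ x : G, μ x = t (lvl x) := fun x => hval _ x (hmem x) (hmin x)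
  have hlvl_le : ∀ (x : G) (k : Fin (m + 1)), x ∈ H k → lvl x ≤ k := by
    intro x k hx
    exact Nat.find_min' (hex x) ⟨k.isLt, by simpa using hx⟩
  have hmono : Monotone H := hchain.monotone
  constructor
  · intro x
    haveI : Nonempty (Fin n) := Fin.pos_iff_nonempty.mp (by omega)
    obtain ⟨i₀, hi₀⟩ := Finite.exists_max (fun i => lvl (x i))
    have hall : ∀ i, x i ∈ H (lvl (x i₀)) := fun i => hmono (hi₀ i) (hmem (x i))
    have hfx : f x ∈ H (lvl (x i₀)) := (hHsub _).2.1 x hall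
    have h1 : (⨅ i, μ (x i)) ≤ μ (x i₀) :=
      ciInf_le (Set.Finite.bddBelow (Set.finite_range _)) i₀
    have h2 : μ (x i₀) ≤ μ (f x) := by
      rw [hμlvl, hμlvl]
      exact ht.antitone (hlvl_le _ _ hfx)
    exact h1.trans h2
  · intro x y hxy
    have hy : y ∈ H (lvl x) := (hHsub _).2.2 x y (hmem x) hxy
    rw [hμlvl, hμlvl]
    exact ht.antitone (hlvl_le _ _ hy)
end

section
/- Let (G,f) be an n-ary group in which every strictly descending chain of n-ary subgroups terminates at a finite step. Then for every fuzzy n-ary subgroup μ of (G,f), the image Im(μ) contains no infinite strictly increasing sequence t_1 < t_2 < t_3 < ...; in particular, if Im(μ) can be arranged as a strictly increasing sequence, then μ has only finitely many values. -/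
open Classical

variable {G : Type*}

/-- If every strictly descending chain of `n`-ary subgroups of `(G,f)` terminates at a finite
step, then the image of any fuzzy `n`-ary subgroup `μ` contains no infinite strictly
increasing sequence. -/
theorem stmt14 [Nonempty G] {n : ℕ} (hn : 2 ≤ n)
    (f : (Fin n → G) → G) (hf : IsNAryGroup n f)
    (hdcc : ¬ ∃ S : ℕ → Set G, (∀ k, IsNArySubgroup f (S k)) ∧ ∀ k, S (k + 1) ⊂ S k)
    (μ : G → ℝ) (hμ : ∀ x, μ x ∈ Set.Icc (0 : ℝ) 1)
    (hfuz : IsFuzzyNArySubgroup f μ) :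
    ¬ ∃ u : ℕ → ℝ, StrictMono u ∧ ∀ k, u k ∈ Set.range μ := by
  rintro ⟨u, hmono, hrange⟩
  haveI : Nonempty (Fin n) := ⟨⟨0, by omega⟩⟩
  apply hdcc
  refine ⟨fun k => {x | u k ≤ μ x}, fun k => ?_, fun k => ?_⟩
  · obtain ⟨x, hx⟩ := hrange k
    refine ⟨⟨x, hx.ge⟩, fun y hy => ?_, fun x y hx hxy => ?_⟩
    · exact le_trans (le_ciInf hy) (hfuz.1 y)
    · exact le_trans hx (hfuz.2 x y hxy)
  · constructor
    · intro x hx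
      exact le_trans (hmono (Nat.lt_succ_self k)).le hx
    · obtain ⟨x, hx⟩ := hrange k
      intro hsub
      have := hsub hx.ge
      simp only [Set.mem_setOf_eq, hx] at this
      exact absurd this (not_le.2 (hmono (Nat.lt_succ_self k)))
end

section
/- Let (G,f) be an n-ary group. If every fuzzy n-ary subgroup of (G,f) has a finite image, then every strictly descending chain of n-ary subgroups of G terminates at a finite step (i.e., there is no infinite strictly descending chain G = S_0 ⊃ S_1 ⊃ S_2 ⊃ ... of n-ary subgroups). -/
open Classical

variable {G : Type*}

/-!
Given a strictly descending chain `S₀ ⊃ S₁ ⊃ ⋯` of `n`-ary subgroups and a strictly increasing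
sequence `v` in `[0, 1]`, the fuzzy set `μ x = ⨅ₖ (if x ∈ Sₖ then 1 else vₖ)` is an infimum of
two-valued fuzzy `n`-ary subgroups, hence itself a fuzzy `n`-ary subgroup. An element of
`Sₖ \ Sₖ₊₁` has `μ`-value `vₖ₊₁`, so `μ` takes infinitely many values.
-/

theorem IsNArySubgroup.isFuzzyNArySubgroup_ite {n : ℕ} [NeZero n] {f : (Fin n → G) → G}
    {H : Set G} (hH : IsNArySubgroup f H) {a b : ℝ} (hba : b ≤ a) :
    IsFuzzyNArySubgroup f (fun x => if x ∈ H then a else b) := by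
  refine ⟨fun x => ?_, fun x y hxy => ?_⟩
  · have hbdd := (Set.finite_range fun i => if x i ∈ H then a else b).bddBelow
    by_cases hx : ∀ i, x i ∈ H
    · simp only [hH.2.1 x hx, if_true]
      exact ciInf_le_of_le hbdd 0 (by split_ifs <;> linarith)
    · obtain ⟨i, hi⟩ := not_forall.mp hx
      refine ciInf_le_of_le hbdd i ?_
      simp only [hi, if_false]
      split_ifs <;> linarith
  · by_cases hx : x ∈ H
    · simp [hx, hH.2.2 x y hx hxy]
    · simp only [hx, if_false]
      split_ifs <;> linarith

theorem IsFuzzyNArySubgroup.iInf {n : ℕ} {f : (Fin n → G) → G} {ι : Type*} [Nonempty ι]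
    {μ : ι → G → ℝ} (hμ : ∀ k, IsFuzzyNArySubgroup f (μ k))
    (hbdd : ∀ x, BddBelow (Set.range fun k => μ k x)) :
    IsFuzzyNArySubgroup f (fun x => ⨅ k, μ k x) := by
  refine ⟨fun x => le_ciInf fun k => ?_, fun x y hxy => ciInf_mono (hbdd x) fun k => ?_⟩
  · calc ⨅ i, ⨅ k, μ k (x i)
        ≤ ⨅ i, μ k (x i) :=
          ciInf_mono (Set.finite_range _).bddBelow fun i => ciInf_le (hbdd (x i)) k
      _ ≤ μ k (f x) := (hμ k).1 x
  · exact (hμ k).2 x y hxy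

noncomputable def chainFuzzySet (S : ℕ → Set G) (v : ℕ → ℝ) (x : G) : ℝ :=
  ⨅ k, if x ∈ S k then 1 else v k

section chainFuzzySet

variable {S : ℕ → Set G} {v : ℕ → ℝ}

theorem bddBelow_range_ite_of_nonneg (hv : ∀ k, 0 ≤ v k) (x : G) :
    BddBelow (Set.range fun k => if x ∈ S k then (1 : ℝ) else v k) :=
  ⟨0, by rintro _ ⟨k, rfl⟩; dsimp only; split_ifs <;> linarith [hv k]⟩

theorem chainFuzzySet_mem_Icc (hv : ∀ k, v k ∈ Set.Icc (0 : ℝ) 1) (x : G) :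
    chainFuzzySet S v x ∈ Set.Icc (0 : ℝ) 1 := by
  refine ⟨le_ciInf fun k => ?_,
    ciInf_le_of_le (bddBelow_range_ite_of_nonneg (fun k => (hv k).1) x) 0 ?_⟩
  · split_ifs <;> linarith [(hv k).1]
  · split_ifs <;> linarith [(hv 0).2]

theorem isFuzzyNArySubgroup_chainFuzzySet {n : ℕ} [NeZero n] {f : (Fin n → G) → G}
    (hS : ∀ k, IsNArySubgroup f (S k)) (hv : ∀ k, v k ∈ Set.Icc (0 : ℝ) 1) :
    IsFuzzyNArySubgroup f (chainFuzzySet S v) :=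
  IsFuzzyNArySubgroup.iInf (fun k => (hS k).isFuzzyNArySubgroup_ite (hv k).2)
    (bddBelow_range_ite_of_nonneg fun k => (hv k).1)

theorem chainFuzzySet_eq_of_mem_of_notMem (hS : Antitone S) (hv : Monotone v)
    (hv01 : ∀ k, v k ∈ Set.Icc (0 : ℝ) 1) {k : ℕ} {x : G} (hxk : x ∈ S k)
    (hxk' : x ∉ S (k + 1)) : chainFuzzySet S v x = v (k + 1) := by
  refine le_antisymm (ciInf_le_of_le (bddBelow_range_ite_of_nonneg (fun k => (hv01 k).1) x)
    (k + 1) (by simp [hxk'])) ?_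
  refine le_ciInf fun j => ?_
  by_cases hjk : j ≤ k
  · simp [hS hjk hxk, (hv01 (k + 1)).2]
  · have hxj : x ∉ S j := fun h => hxk' (hS (by omega) h)
    simpa [hxj] using hv (by omega : k + 1 ≤ j)

theorem infinite_range_chainFuzzySet (hS : ∀ k, S (k + 1) ⊂ S k) (hv : StrictMono v)
    (hv01 : ∀ k, v k ∈ Set.Icc (0 : ℝ) 1) : (Set.range (chainFuzzySet S v)).Infinite := by
  have hanti : Antitone S := antitone_nat_of_succ_le fun k => (hS k).1
  choose c hc hc' using fun k => Set.exists_of_ssubset (hS k)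
  have hvalue k : chainFuzzySet S v (c k) = v (k + 1) :=
    chainFuzzySet_eq_of_mem_of_notMem hanti hv.monotone hv01 (hc k) (hc' k)
  refine Set.infinite_of_injective_forall_mem (f := fun k => chainFuzzySet S v (c k))
    (fun j k hjk => ?_) fun k => ⟨c k, rfl⟩
  exact Nat.succ_injective (hv.injective (by simpa [hvalue] using hjk))

end chainFuzzySet

theorem stmt15_general {n : ℕ} (hn : 2 ≤ n)
    (f : (Fin n → G) → G)
    (hfin : ∀ μ : G → ℝ, (∀ x, μ x ∈ Set.Icc (0 : ℝ) 1) → IsFuzzyNArySubgroup f μ →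
      (Set.range μ).Finite) :
    ¬ ∃ S : ℕ → Set G, S 0 = Set.univ ∧ (∀ k, IsNArySubgroup f (S k)) ∧
      ∀ k, S (k + 1) ⊂ S k := by
  rintro ⟨S, -, hS, hchain⟩
  have : NeZero n := ⟨by omega⟩
  set v : ℕ → ℝ := fun k => 1 - ((k : ℝ) + 1)⁻¹
  have hv : StrictMono v := fun j k hjk => by
    have : (j : ℝ) < k := by exact_mod_cast hjk
    simp only [v]
    gcongr
  have hinv (k : ℕ) : ((k : ℝ) + 1)⁻¹ ∈ Set.Icc (0 : ℝ) 1 :=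
    ⟨by positivity, inv_le_one_of_one_le₀ (by simp)⟩
  have hv01 k : v k ∈ Set.Icc (0 : ℝ) 1 := ⟨by linarith [(hinv k).2], by linarith [(hinv k).1]⟩
  exact infinite_range_chainFuzzySet hchain hv hv01 <|
    hfin _ (chainFuzzySet_mem_Icc hv01) (isFuzzyNArySubgroup_chainFuzzySet hS hv01)

/-- If every fuzzy `n`-ary subgroup of `(G,f)` has a finite image, then there is no infinite
strictly descending chain `G = S₀ ⊃ S₁ ⊃ S₂ ⊃ ...` of `n`-ary subgroups of `G`. -/
theorem stmt15 [Nonempty G] {n : ℕ} (hn : 2 ≤ n)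
    (f : (Fin n → G) → G) (hf : IsNAryGroup n f)
    (hfin : ∀ μ : G → ℝ, (∀ x, μ x ∈ Set.Icc (0 : ℝ) 1) → IsFuzzyNArySubgroup f μ →
      (Set.range μ).Finite) :
    ¬ ∃ S : ℕ → Set G, S 0 = Set.univ ∧ (∀ k, IsNArySubgroup f (S k)) ∧
      ∀ k, S (k + 1) ⊂ S k :=
  stmt15_general hn f hfin
end

section
/- Let (G,f) be an n-ary group. Every strictly ascending chain of n-ary subgroups of G terminates at a finite step if and only if the set of values of every fuzzy n-ary subgroup of G is a well-ordered subset of [0,1] (with respect to the usual order, i.e. every nonempty subset of Im(μ) has a least element; equivalently, Im(μ) contains no infinite strictly decreasing sequence). -/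
/-!
A fuzzy subset `μ` is a fuzzy `n`-ary subgroup exactly when each of its level sets
`{x | a ≤ μ x}`, `a ∈ Im μ`, is an `n`-ary subgroup, and `a < b` in `Im μ` gives a strict
inclusion of the level sets. So an infinite descending sequence of values yields a strictly
ascending chain of subgroups. Conversely, a strictly ascending chain `S₀ ⊂ S₁ ⊂ ⋯` is the
family of level sets of the fuzzy subgroup taking the value `1/(k+1)` on `S_k \ S_{k-1}` and
`0` outside the union, whose image contains the sequence `1/(k+2)` without least element.
-/

open Classical

variable {G : Type*}

theorem Set.isWF_iff_forall_exists_least {α : Type*} [LinearOrder α] {s : Set α} :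
    s.IsWF ↔ ∀ T ⊆ s, T.Nonempty → ∃ a ∈ T, ∀ b ∈ T, a ≤ b := by
  refine ⟨fun hs T hT hne => ⟨(hs.mono hT).min hne, (hs.mono hT).min_mem hne,
    fun b hb => (hs.mono hT).min_le hne hb⟩, fun h => ?_⟩
  rw [Set.isWF_iff_no_descending_seq]
  intro u hu hmem
  obtain ⟨a, ⟨k, rfl⟩, hleast⟩ :=
    h (Set.range u) (Set.range_subset_iff.2 hmem) (Set.range_nonempty u)
  exact (hleast _ ⟨k + 1, rfl⟩).not_gt (hu k.lt_succ_self)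

theorem setOf_le_ssubset_setOf_le {α β : Type*} [LinearOrder β] {μ : α → β} {a b : β}
    (hab : a < b) (ha : a ∈ Set.range μ) : {x | b ≤ μ x} ⊂ {x | a ≤ μ x} := by
  obtain ⟨x, rfl⟩ := ha
  exact (Set.ssubset_iff_of_subset fun y hy => hab.le.trans hy).2
    ⟨x, le_refl (μ x), hab.not_ge⟩

section Fuzzy

variable {n : ℕ} {f : (Fin n → G) → G} {μ : G → ℝ}

theorem isFuzzyNArySubgroup_iff_isNArySubgroup_setOf_le [NeZero n] :
    IsFuzzyNArySubgroup f μ ↔ ∀ a ∈ Set.range μ, IsNArySubgroup f {x | a ≤ μ x} := by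
  constructor
  · rintro ⟨hf, hskew⟩ _ ⟨x₀, rfl⟩
    exact ⟨⟨x₀, le_refl (μ x₀)⟩, fun x hx => (le_ciInf hx).trans (hf x),
      fun x y hx hxy => hx.trans (hskew x y hxy)⟩
  · intro h
    refine ⟨fun x => ?_, fun x y hxy => (h _ ⟨x, rfl⟩).2.2 x y (le_refl (μ x)) hxy⟩
    obtain ⟨i₀, hi₀⟩ := exists_eq_ciInf_of_finite (f := fun i => μ (x i))
    rw [← hi₀]
    exact (h _ ⟨x i₀, rfl⟩).2.1 x fun i =>
      hi₀.trans_le (ciInf_le (Set.finite_range _).bddBelow i)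

end Fuzzy

section Chain

variable (S : ℕ → Set G)

noncomputable def fuzzyOfChain (x : G) : ℝ :=
  if h : ∃ k, x ∈ S k then 1 / (Nat.find h + 1) else 0

theorem fuzzyOfChain_mem_Icc (x : G) : fuzzyOfChain S x ∈ Set.Icc (0 : ℝ) 1 := by
  unfold fuzzyOfChain
  split_ifs
  · exact ⟨by positivity, div_le_one_of_le₀ (by simp) (by positivity)⟩
  · simp

variable {S}

theorem le_fuzzyOfChain_iff (hS : Monotone S) {x : G} {k : ℕ} :
    1 / ((k : ℝ) + 1) ≤ fuzzyOfChain S x ↔ x ∈ S k := by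
  unfold fuzzyOfChain
  split_ifs with h
  · rw [one_div_le_one_div (by positivity) (by positivity), add_le_add_iff_right, Nat.cast_le]
    exact ⟨fun hk => hS hk (Nat.find_spec h), fun hx => Nat.find_min' h hx⟩
  · exact ⟨fun hk => absurd hk (not_le.2 (by positivity)), fun hx => absurd ⟨k, hx⟩ h⟩

theorem fuzzyOfChain_eq_of_mem_of_notMem (hS : Monotone S) {x : G} {k : ℕ}
    (hx : x ∈ S (k + 1)) (hxk : x ∉ S k) : fuzzyOfChain S x = 1 / ((k : ℝ) + 2) := by
  have h : ∃ j, x ∈ S j := ⟨k + 1, hx⟩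
  have hfind : Nat.find h = k + 1 :=
    (Nat.find_eq_iff h).2 ⟨hx, fun j hj hxj => hxk (hS (Nat.lt_succ_iff.1 hj) hxj)⟩
  rw [fuzzyOfChain, dif_pos h, hfind]
  push_cast
  ring

theorem isFuzzyNArySubgroup_fuzzyOfChain {n : ℕ} [NeZero n] {f : (Fin n → G) → G}
    (hS : ∀ k, IsNArySubgroup f (S k)) (hmono : Monotone S) :
    IsFuzzyNArySubgroup f (fuzzyOfChain S) := by
  rw [isFuzzyNArySubgroup_iff_isNArySubgroup_setOf_le]
  rintro _ ⟨x₀, rfl⟩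
  by_cases h : ∃ k, x₀ ∈ S k
  · have hlevel : {x | fuzzyOfChain S x₀ ≤ fuzzyOfChain S x} = S (Nat.find h) := by
      ext x
      rw [Set.mem_ofPred_eq, fuzzyOfChain, dif_pos h, le_fuzzyOfChain_iff hmono]
    exact hlevel ▸ hS _
  · have h0 : fuzzyOfChain S x₀ = 0 := dif_neg h
    have hlevel : {x | fuzzyOfChain S x₀ ≤ fuzzyOfChain S x} = Set.univ :=
      Set.eq_univ_of_forall fun x => h0.trans_le (fuzzyOfChain_mem_Icc S x).1
    rw [hlevel]
    exact ⟨⟨x₀, trivial⟩, fun _ _ => trivial, fun _ _ _ _ => trivial⟩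

end Chain

theorem stmt16_general {n : ℕ} (hn : 2 ≤ n)
    (f : (Fin n → G) → G) :
    (¬ ∃ S : ℕ → Set G, (∀ k, IsNArySubgroup f (S k)) ∧ ∀ k, S k ⊂ S (k + 1)) ↔
      ∀ μ : G → ℝ, (∀ x, μ x ∈ Set.Icc (0 : ℝ) 1) → IsFuzzyNArySubgroup f μ →
        ∀ T ⊆ Set.range μ, T.Nonempty → ∃ a ∈ T, ∀ b ∈ T, a ≤ b := by
  have : NeZero n := ⟨by omega⟩
  simp_rw [← Set.isWF_iff_forall_exists_least, Set.isWF_iff_no_descending_seq]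
  constructor
  · intro hchain μ _ hμ u hu hmem
    exact hchain ⟨fun k => {x | u k ≤ μ x},
      fun k => isFuzzyNArySubgroup_iff_isNArySubgroup_setOf_le.1 hμ _ (hmem k),
      fun k => setOf_le_ssubset_setOf_le (hu k.lt_succ_self) (hmem (k + 1))⟩
  · rintro hwo ⟨S, hS, hSS⟩
    have hmono : Monotone S := monotone_nat_of_le_succ fun k => (hSS k).subset
    refine hwo _ (fuzzyOfChain_mem_Icc S) (isFuzzyNArySubgroup_fuzzyOfChain hS hmono)
      (fun k : ℕ => 1 / ((k : ℝ) + 2)) (fun j k hjk => ?_) fun k => ?_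
    · exact one_div_lt_one_div_of_lt (by positivity) (by simpa using hjk)
    · obtain ⟨x, hx, hxk⟩ := Set.exists_of_ssubset (hSS k)
      exact ⟨x, fuzzyOfChain_eq_of_mem_of_notMem hmono hx hxk⟩

/-- Every strictly ascending chain of `n`-ary subgroups of `(G,f)` terminates at a finite
step iff the set of values of every fuzzy `n`-ary subgroup of `G` is a well-ordered subset
of `[0,1]` (every nonempty subset of the image has a least element). -/
theorem stmt16 [Nonempty G] {n : ℕ} (hn : 2 ≤ n)
    (f : (Fin n → G) → G) (hf : IsNAryGroup n f) :
    (¬ ∃ S : ℕ → Set G, (∀ k, IsNArySubgroup f (S k)) ∧ ∀ k, S k ⊂ S (k + 1)) ↔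
      ∀ μ : G → ℝ, (∀ x, μ x ∈ Set.Icc (0 : ℝ) 1) → IsFuzzyNArySubgroup f μ →
        ∀ T ⊆ Set.range μ, T.Nonempty → ∃ a ∈ T, ∀ b ∈ T, a ≤ b :=
  stmt16_general hn f
end

section
/- Let φ be any mapping from an n-ary group (G_1,f_1) to an n-ary group (G_2,f_2) and let μ be a fuzzy n-ary subgroup of G_1. Then for every t ∈ (0,1], the level subset of the image satisfies φ(μ)_t = ⋂_{0 < ε < t} φ(μ_{t−ε}), where φ(μ_{t−ε}) denotes the set-theoretic image of the level subset μ_{t−ε} under φ. -/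
open Classical

variable {G : Type*}

/-- The image of a fuzzy subset `μ` under `φ`:
`φ(μ)(y) = sup {μ(x) : x ∈ φ⁻¹(y)}` if `φ⁻¹(y) ≠ ∅`, and `0` otherwise. -/
noncomputable def fuzzyImage {G₁ G₂ : Type*} (φ : G₁ → G₂) (μ : G₁ → ℝ) (y : G₂) : ℝ :=
  if (φ ⁻¹' {y}).Nonempty then sSup (μ '' (φ ⁻¹' {y})) else 0

/-- For any map `φ` between `n`-ary groups and any fuzzy `n`-ary subgroup `μ` of `G₁`, the
level subsets of the image satisfy `φ(μ)_t = ⋂_{0<ε<t} φ(μ_{t-ε})` for every `t ∈ (0,1]`. -/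
theorem stmt17 {G₁ G₂ : Type*} [Nonempty G₁] [Nonempty G₂] {n : ℕ} (hn : 2 ≤ n)
    (f₁ : (Fin n → G₁) → G₁) (f₂ : (Fin n → G₂) → G₂)
    (hf₁ : IsNAryGroup n f₁) (hf₂ : IsNAryGroup n f₂)
    (φ : G₁ → G₂)
    (μ : G₁ → ℝ) (hμ : ∀ x, μ x ∈ Set.Icc (0 : ℝ) 1)
    (hfuz : IsFuzzyNArySubgroup f₁ μ)
    (t : ℝ) (ht : t ∈ Set.Ioc (0 : ℝ) 1) :
    {y : G₂ | t ≤ fuzzyImage φ μ y} =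
      ⋂ ε ∈ Set.Ioo (0 : ℝ) t, φ '' {x : G₁ | t - ε ≤ μ x} := by
  ext y
  simp only [Set.mem_setOf_eq, Set.mem_iInter, Set.mem_image, Set.mem_Ioo]
  have hbdd : ∀ (S : Set G₁), BddAbove (μ '' S) := fun S =>
    ⟨1, fun r ⟨x, _, hx⟩ => hx ▸ (hμ x).2⟩
  constructor
  · intro h ε hε
    have hne : (φ ⁻¹' {y}).Nonempty := by
      by_contra hc
      rw [fuzzyImage, if_neg hc] at h
      linarith [ht.1]
    rw [fuzzyImage, if_pos hne] at h
    have hlt : t - ε < sSup (μ '' (φ ⁻¹' {y})) := by linarith [hε.1]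
    obtain ⟨r, ⟨x, hx, rfl⟩, hr⟩ := exists_lt_of_lt_csSup ((hne.image μ)) hlt
    exact ⟨x, le_of_lt hr, hx⟩
  · intro h
    have hne : (φ ⁻¹' {y}).Nonempty := by
      obtain ⟨x, _, hx⟩ := h (t/2) ⟨by linarith [ht.1], by linarith [ht.1]⟩
      exact ⟨x, hx⟩
    rw [fuzzyImage, if_pos hne]
    by_contra hc
    push_neg at hc
    set s := sSup (μ '' (φ ⁻¹' {y})) with hs
    have hs0 : 0 ≤ s := by
      obtain ⟨x, hx⟩ := hne
      exact le_trans (hμ x).1 (le_csSup (hbdd _) ⟨x, hx, rfl⟩)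
    set ε := min ((t - s)/2) (t/2) with hε
    have hεpos : 0 < ε := lt_min (by linarith) (by linarith [ht.1])
    have hεlt : ε < t := lt_of_le_of_lt (min_le_right _ _) (by linarith [ht.1])
    obtain ⟨x, hx1, hx2⟩ := h ε ⟨hεpos, hεlt⟩
    have : μ x ≤ s := le_csSup (hbdd _) ⟨x, hx2, rfl⟩
    have : t - ε ≤ s := le_trans hx1 this
    have : ε ≤ (t - s)/2 := min_le_left _ _
    linarith
end

section
/- Let φ be a homomorphism from an n-ary group (G_1,f_1) to an n-ary group (G_2,f_2), i.e. φ(f_1(x_1,...,x_n)) = f_2(φ(x_1),...,φ(x_n)) for all x_1,...,x_n ∈ G_1, and let μ be a fuzzy n-ary subgroup of G_1. Then the homomorphic image φ(μ) is a fuzzy n-ary subgroup of G_2. -/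
open Classical

variable {G : Type*}

section Aux
variable {G₁ G₂ : Type*}

lemma bddAbove_img (μ : G₁ → ℝ) (hμ1 : ∀ x, μ x ≤ 1) (S : Set G₁) :
    BddAbove (μ '' S) := ⟨1, by rintro r ⟨x, _, rfl⟩; exact hμ1 x⟩

lemma le_fuzzyImage (φ : G₁ → G₂) (μ : G₁ → ℝ) (hμ1 : ∀ x, μ x ≤ 1)
    {a : G₁} {y : G₂} (ha : φ a = y) : μ a ≤ fuzzyImage φ μ y := by
  unfold fuzzyImage
  rw [if_pos ⟨a, ha⟩]
  exact le_csSup (bddAbove_img μ hμ1 _) ⟨a, ha, rfl⟩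

lemma fuzzyImage_nonneg (φ : G₁ → G₂) (μ : G₁ → ℝ) (hμ : ∀ x, μ x ∈ Set.Icc (0:ℝ) 1)
    (y : G₂) : 0 ≤ fuzzyImage φ μ y := by
  unfold fuzzyImage
  split
  · next h =>
    obtain ⟨a, ha⟩ := h
    exact le_trans (hμ a).1 (le_csSup (bddAbove_img μ (fun x => (hμ x).2) _) ⟨a, ha, rfl⟩)
  · exact le_refl 0

variable {G : Type*}

lemma skew_fun_eq {n : ℕ} (hn : 2 ≤ n) (x y : G) :
    (fun k : Fin n => if (k : ℕ) = n - 1 then y else x)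
      = Function.update (fun _ => x) ⟨n - 1, by omega⟩ y := by
  funext k
  simp [Function.update, Fin.ext_iff]

lemma skew_existsUnique {n : ℕ} (hn : 2 ≤ n) (f : (Fin n → G) → G)
    (hf : IsNAryGroup n f) (x : G) : ∃! y, IsSkew f x y := by
  obtain ⟨z, hz, hu⟩ := hf.solv ⟨n - 1, by omega⟩ (fun _ => x) x
  refine ⟨z, ?_, fun y hy => hu y ?_⟩
  · show (f fun k : Fin n => if (k : ℕ) = n - 1 then z else x) = x
    rw [skew_fun_eq hn]; exact hz
  · show f (Function.update (fun _ => x) ⟨n - 1, by omega⟩ y) = x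
    rw [← skew_fun_eq hn]; exact hy

end Aux

/-- The homomorphic image of a fuzzy `n`-ary subgroup of `G₁` under a homomorphism of
`n`-ary groups `φ : G₁ → G₂` is a fuzzy `n`-ary subgroup of `G₂`. -/
theorem stmt18 {G₁ G₂ : Type*} [Nonempty G₁] [Nonempty G₂] {n : ℕ} (hn : 2 ≤ n)
    (f₁ : (Fin n → G₁) → G₁) (f₂ : (Fin n → G₂) → G₂)
    (hf₁ : IsNAryGroup n f₁) (hf₂ : IsNAryGroup n f₂)
    (φ : G₁ → G₂) (hφ : ∀ x : Fin n → G₁, φ (f₁ x) = f₂ (fun i => φ (x i)))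
    (μ : G₁ → ℝ) (hμ : ∀ x, μ x ∈ Set.Icc (0 : ℝ) 1)
    (hfuz : IsFuzzyNArySubgroup f₁ μ) :
    IsFuzzyNArySubgroup f₂ (fuzzyImage φ μ) := by
  obtain ⟨hclosed, hskew⟩ := hfuz
  have hμ1 : ∀ x, μ x ≤ 1 := fun x => (hμ x).2
  haveI : Nonempty (Fin n) := ⟨⟨0, by omega⟩⟩
  constructor
  · intro x
    have hbdd : BddBelow (Set.range fun i => fuzzyImage φ μ (x i)) :=
      (Set.finite_range _).bddBelow
    by_cases h : ∀ i, (φ ⁻¹' {x i}).Nonempty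
    · refine le_of_forall_pos_le_add ?_
      intro ε hε
      have key : ∀ i, ∃ a, φ a = x i ∧ fuzzyImage φ μ (x i) - ε < μ a := by
        intro i
        have hne : (μ '' (φ ⁻¹' {x i})).Nonempty := (h i).image μ
        have himg : fuzzyImage φ μ (x i) = sSup (μ '' (φ ⁻¹' {x i})) := if_pos (h i)
        obtain ⟨b, ⟨a, ha, rfl⟩, hb⟩ :=
          exists_lt_of_lt_csSup hne (show sSup (μ '' (φ ⁻¹' {x i})) - ε
            < sSup (μ '' (φ ⁻¹' {x i})) from sub_lt_self _ hε)
        exact ⟨a, ha, by rw [himg]; exact hb⟩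
      choose a ha hlt using key
      have h1 : φ (f₁ a) = f₂ x := by
        rw [hφ]; congr 1; funext i; exact ha i
      have h2 : (⨅ i, fuzzyImage φ μ (x i)) - ε ≤ ⨅ i, μ (a i) := by
        apply le_ciInf
        intro i
        have hle : (⨅ i, fuzzyImage φ μ (x i)) ≤ fuzzyImage φ μ (x i) := ciInf_le hbdd i
        linarith [hlt i]
      have h3 : μ (f₁ a) ≤ fuzzyImage φ μ (f₂ x) := le_fuzzyImage φ μ hμ1 h1
      have h4 := h2.trans (hclosed a)
      linarith
    · push_neg at h
      obtain ⟨i, hi⟩ := h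
      have h0 : fuzzyImage φ μ (x i) = 0 := if_neg (by rw [hi]; exact Set.not_nonempty_empty)
      calc (⨅ i, fuzzyImage φ μ (x i)) ≤ fuzzyImage φ μ (x i) := ciInf_le hbdd i
        _ = 0 := h0
        _ ≤ fuzzyImage φ μ (f₂ x) := fuzzyImage_nonneg φ μ hμ _
  · intro x y hxy
    by_cases hx : (φ ⁻¹' {x}).Nonempty
    · have himg : fuzzyImage φ μ x = sSup (μ '' (φ ⁻¹' {x})) := if_pos hx
      rw [himg]
      apply csSup_le (hx.image μ)
      rintro r ⟨a, (ha : φ a = x), rfl⟩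
      obtain ⟨b, hb, -⟩ := skew_existsUnique hn f₁ hf₁ a
      have hμab : μ a ≤ μ b := hskew a b hb
      have hφb : IsSkew f₂ x (φ b) := by
        have hom := hφ (fun k => if (k : ℕ) = n - 1 then b else a)
        rw [hb, ha] at hom
        have heq : (fun i : Fin n => φ (if (i : ℕ) = n - 1 then b else a))
            = fun k : Fin n => if (k : ℕ) = n - 1 then φ b else x := by
          funext i; split <;> simp [ha]
        rw [heq] at hom
        exact hom.symm
      obtain ⟨z, hz, hu⟩ := skew_existsUnique hn f₂ hf₂ x
      have hby : φ b = y := (hu _ hφb).trans (hu y hxy).symm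
      exact hμab.trans (le_fuzzyImage φ μ hμ1 hby)
    · have h0 : fuzzyImage φ μ x = 0 := if_neg hx
      rw [h0]
      exact fuzzyImage_nonneg φ μ hμ y
end

section
/- Let φ be a surjective homomorphism from an n-ary group (G_1,f_1) to an n-ary group (G_2,f_2) and let μ be a fuzzy n-ary subgroup of G_1 which has the sup-property. Then φ(μ)_t = φ(μ_t) for every t ∈ [0,1] (where φ(μ_t) is the set-theoretic image of the level subset μ_t); consequently, if {μ_{t_i} : i ∈ I} is the collection of all level n-ary subgroups of μ, then {φ(μ_{t_i}) : i ∈ I} is the collection of all level n-ary subgroups of φ(μ). -/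
open Classical

variable {G : Type*}

/-- Let `φ : G₁ → G₂` be a surjective homomorphism of `n`-ary groups and `μ` a fuzzy `n`-ary
subgroup of `G₁` with the sup-property. Then `φ(μ)_t = φ(μ_t)` for every `t ∈ [0,1]`;
consequently, the level subsets of `φ(μ)` are exactly the images of the level subsets
of `μ`. -/
theorem stmt19 {G₁ G₂ : Type*} [Nonempty G₁] [Nonempty G₂] {n : ℕ} (hn : 2 ≤ n)
    (f₁ : (Fin n → G₁) → G₁) (f₂ : (Fin n → G₂) → G₂)
    (hf₁ : IsNAryGroup n f₁) (hf₂ : IsNAryGroup n f₂)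
    (φ : G₁ → G₂) (hsurj : Function.Surjective φ)
    (hφ : ∀ x : Fin n → G₁, φ (f₁ x) = f₂ (fun i => φ (x i)))
    (μ : G₁ → ℝ) (hμ : ∀ x, μ x ∈ Set.Icc (0 : ℝ) 1)
    (hfuz : IsFuzzyNArySubgroup f₁ μ)
    (hsup : ∀ S : Set G₁, S.Nonempty → ∃ x₀ ∈ S, μ x₀ = sSup (μ '' S)) :
    (∀ t ∈ Set.Icc (0 : ℝ) 1,
        {y : G₂ | t ≤ fuzzyImage φ μ y} = φ '' {x : G₁ | t ≤ μ x}) ∧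
      {T : Set G₂ | ∃ t ∈ Set.Icc (0 : ℝ) 1, T = φ '' {x : G₁ | t ≤ μ x}} =
        {T : Set G₂ | ∃ t ∈ Set.Icc (0 : ℝ) 1, T = {y : G₂ | t ≤ fuzzyImage φ μ y}} := by

  have key : ∀ t : ℝ, {y : G₂ | t ≤ fuzzyImage φ μ y} = φ '' {x : G₁ | t ≤ μ x} := by
    intro t
    ext y
    have hne : (φ ⁻¹' {y}).Nonempty := by
      obtain ⟨x, hx⟩ := hsurj y
      exact ⟨x, hx⟩
    obtain ⟨x₀, hx₀, hx₀sup⟩ := hsup _ hne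
    have hval : fuzzyImage φ μ y = μ x₀ := by
      simp [fuzzyImage, hne, hx₀sup]
    constructor
    · intro hy
      exact ⟨x₀, by simpa [hval] using hy, hx₀⟩
    · rintro ⟨x, hx, rfl⟩
      have hmem : μ x ∈ μ '' (φ ⁻¹' {φ x}) := ⟨x, rfl, rfl⟩
      have hbdd : BddAbove (μ '' (φ ⁻¹' {φ x})) :=
        ⟨1, by rintro r ⟨z, _, rfl⟩; exact (hμ z).2⟩
      have := le_csSup hbdd hmem
      simp only [Set.mem_setOf_eq, hval]
      calc t ≤ μ x := hx
        _ ≤ sSup (μ '' (φ ⁻¹' {φ x})) := this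
        _ = μ x₀ := hx₀sup.symm
  refine ⟨fun t _ => key t, ?_⟩
  ext T
  constructor
  · rintro ⟨t, ht, rfl⟩
    exact ⟨t, ht, (key t).symm⟩
  · rintro ⟨t, ht, rfl⟩
    exact ⟨t, ht, key t⟩
end
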